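/- arXiv:2110.03597 — 9 statements merged into one kernel-verified Lean document; each statement's English description precedes it below -/
import Mathlib

section
/- Theorem 1(1): Let t, k ∈ ℝ with t ≠ 0, and set p = b^t, l = c^t. The three points A, M(k), M(k+t) are not collinear (since y_A ≠ 0, b ≠ c and t ≠ 0 force M(k) ≠ M(k+t)); let O = (x_O, y_O) be their circumcenter, i.e. the unique point equidistant from all three. Then F⁻_{p,l}(x_O, y_O) = 0. In particular, as k ranges over ℝ, all circumcenters of the triangles A M(k) M(k+t) lie on the fixed conic F⁻_{p,l} = 0. -/
/-- The conic `F⁻_{p,l}(x,y) = 0` from the paper (with `c = |AB|`). -/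
noncomputable def Fminus (xA yA c p l x y : ℝ) : ℝ :=
  4*y^2*yA^2*(p-l)^2 + x*y*yA*(p-l)^2*(8*xA-4)
    + x^2*((p-l)^2*(2*xA-1)^2 - (p+l)^2)
    - 2*y*yA*(2*c^2*(p-l)^2 - (p+l)^2)
    + x*(-(2*c^2*(p-l)^2*(2*xA-1)) + 2*xA*(p+l)^2)
    + c^2*(c^2*(p-l)^2 - (p+l)^2)

/-- Pure algebra: if `X, Y` satisfy the circumcenter equations in terms of `m1, m2`, and
`m1, m2, p, l` satisfy the cross-ratio constraint, then `(X, Y)` lies on the conic. -/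
lemma key_alg2 (xA yA c p l m1 m2 X Y : ℝ)
    (hc2 : c^2 = xA^2 + yA^2)
    (hcon : p*m2*(1-m1) = l*m1*(1-m2))
    (hx : 2*X = m1 + m2)
    (hy : 2*yA*Y = (xA^2+yA^2) - 2*xA*X + 2*m1*X - m1^2)
    (hyA : yA ≠ 0) :
    Fminus xA yA c p l X Y = 0 := by
  have hN : 2*yA*Y = xA^2 + yA^2 - xA*(m1+m2) + m1*m2 := by
    linear_combination hy + (m1 - xA) * hx
  have hG : 4*yA^2 * Fminus xA yA c p l X Y = 0 := by
    unfold Fminus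
    linear_combination (-4*yA^2*l^2 - 8*yA^2*p*l - 4*yA^2*p^2 + 4*yA^4*l^2 - 8*yA^4*p*l + 4*yA^4*p^2 + 4*xA^2*yA^2*l^2 - 8*xA^2*yA^2*p*l + 4*xA^2*yA^2*p^2 + 4*c^2*yA^2*l^2 - 8*c^2*yA^2*p*l + 4*c^2*yA^2*p^2 - 16*Y*yA^3*l^2 + 32*Y*yA^3*p*l - 16*Y*yA^3*p^2 + 8*X*yA^2*l^2 - 16*X*yA^2*p*l + 8*X*yA^2*p^2 - 16*X*xA*yA^2*l^2 + 32*X*xA*yA^2*p*l - 16*X*xA*yA^2*p^2) * hc2 + (4*yA^2*l^2 + 8*yA^2*p*l + 4*yA^2*p^2 - 4*yA^4*l^2 + 8*yA^4*p*l - 4*yA^4*p^2 - 4*xA^2*yA^2*l^2 + 8*xA^2*yA^2*p*l - 4*xA^2*yA^2*p^2 - 4*m2*xA*yA^2*l^2 + 8*m2*xA*yA^2*p*l - 4*m2*xA*yA^2*p^2 - 4*m1*xA*yA^2*l^2 + 8*m1*xA*yA^2*p*l - 4*m1*xA*yA^2*p^2 + 4*m1*m2*yA^2*l^2 - 8*m1*m2*yA^2*p*l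 + 4*m1*m2*yA^2*p^2 + 8*Y*yA^3*l^2 - 16*Y*yA^3*p*l + 8*Y*yA^3*p^2 - 8*X*yA^2*l^2 + 16*X*yA^2*p*l - 8*X*yA^2*p^2 + 16*X*xA*yA^2*l^2 - 32*X*xA*yA^2*p*l + 16*X*xA*yA^2*p^2) * hN + (4*xA*yA^2*l^2 + 8*xA*yA^2*p*l + 4*xA*yA^2*p^2 - 4*m2*yA^2*p*l - 4*m2*xA^2*yA^2*l^2 + 8*m2*xA^2*yA^2*p*l - 4*m2*xA^2*yA^2*p^2 - 4*m1*yA^2*p*l - 4*m1*xA^2*yA^2*l^2 + 8*m1*xA^2*yA^2*p*l - 4*m1*xA^2*yA^2*p^2 - 4*m1*m2*yA^2*l^2 + 8*m1*m2*yA^2*p*l - 4*m1*m2*yA^2*p^2 + 8*m1*m2*xA*yA^2*l^2 - 16*m1*m2*xA*yA^2*p*l + 8*m1*m2*xA*yA^2*p^2 - 8*X*yA^2*p*l - 8*X*xA*yA^2*l^2 + 16*X*xA*yA^2*p*l - 8*X*xA*yA^2*p^2 + 8*X*xA^2*yA^2*l^2 - 16*X*xA^2*yA^2*p*l + 8*X*xA^2*yA^2*p^2)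 * hx + (4*yA^2*(m1*p + m1*m2*l - m1*m2*p - m2*l)) * hcon
  have h4 : (4:ℝ)*yA^2 ≠ 0 := by positivity
  exact (mul_eq_zero.mp hG).resolve_left h4

lemma not_collinear_aux (xA yA m1 m2 : ℝ) (hyA : yA ≠ 0) (hm : m1 ≠ m2) :
    ¬ Collinear ℝ ({(xA, yA), (m1, 0), (m2, 0)} : Set (ℝ × ℝ)) := by
  intro hcol
  obtain ⟨d, hd⟩ := (collinear_iff_of_mem (by simp : ((m1, 0) : ℝ × ℝ) ∈ _)).1 hcol
  obtain ⟨r, hr⟩ := hd (xA, yA) (by simp)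
  obtain ⟨s, hs⟩ := hd (m2, 0) (by simp)
  simp only [Prod.ext_iff, Prod.mk.injEq, Prod.smul_fst, Prod.smul_snd, Prod.fst_add,
    Prod.snd_add, smul_eq_mul, vadd_eq_add, add_zero] at hs hr
  obtain ⟨hs1, hs2⟩ := hs
  obtain ⟨hr1, hr2⟩ := hr
  have hsne : s ≠ 0 := by
    rintro rfl
    simp at hs1
    exact hm hs1.symm
  have hd2 : d.2 = 0 := by
    rcases mul_eq_zero.1 hs2.symm with h | h
    · exact absurd h hsne
    · exact h
  rw [hd2, mul_zero] at hr2
  exact hyA hr2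

/-- Theorem 1(1): for fixed span `t ≠ 0`, the circumcenter of `A M(k) M(k+t)` lies on the
conic `F⁻_{b^t, c^t} = 0`, and the three points are indeed not collinear. -/
theorem statement0 (xA yA : ℝ) (hyA : yA ≠ 0)
    (b c : ℝ) (hb : b = Real.sqrt ((xA - 1)^2 + yA^2))
    (hc : c = Real.sqrt (xA^2 + yA^2)) (hbc : b ≠ c)
    (t k : ℝ) (ht : t ≠ 0)
    (p l : ℝ) (hp : p = b ^ t) (hl : l = c ^ t)
    (M : ℝ → ℝ × ℝ) (hM : ∀ s : ℝ, M s = (c ^ s / (c ^ s + b ^ s), 0))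
    (O : ℝ × ℝ)
    (hOA : (O.1 - xA)^2 + (O.2 - yA)^2 = (O.1 - (M k).1)^2 + (O.2 - (M k).2)^2)
    (hOM : (O.1 - (M k).1)^2 + (O.2 - (M k).2)^2
        = (O.1 - (M (k + t)).1)^2 + (O.2 - (M (k + t)).2)^2) :
    ¬ Collinear ℝ ({(xA, yA), M k, M (k + t)} : Set (ℝ × ℝ)) ∧
      Fminus xA yA c p l O.1 O.2 = 0 := by
  have hcpos : 0 < c := by
    rw [hc]; apply Real.sqrt_pos.2; positivity
  have hbpos : 0 < b := by
    rw [hb]; apply Real.sqrt_pos.2; positivity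
  have hc2 : c^2 = xA^2 + yA^2 := by
    rw [hc, Real.sq_sqrt (by positivity)]
  set u := c ^ k with hu
  set v := b ^ k with hv
  have hupos : 0 < u := Real.rpow_pos_of_pos hcpos k
  have hvpos : 0 < v := Real.rpow_pos_of_pos hbpos k
  have hlpos : 0 < l := hl ▸ Real.rpow_pos_of_pos hcpos t
  have hppos : 0 < p := hp ▸ Real.rpow_pos_of_pos hbpos t
  have hckt : c ^ (k + t) = u * l := by rw [hl, hu, ← Real.rpow_add hcpos]
  have hbkt : b ^ (k + t) = v * p := by rw [hp, hv, ← Real.rpow_add hbpos]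
  have hpl : p ≠ l := by
    intro h
    apply hbc
    have hbp : (b ^ t) ^ t⁻¹ = b := by
      rw [← Real.rpow_mul hbpos.le, mul_inv_cancel₀ ht, Real.rpow_one]
    have hcp : (c ^ t) ^ t⁻¹ = c := by
      rw [← Real.rpow_mul hcpos.le, mul_inv_cancel₀ ht, Real.rpow_one]
    rw [← hbp, ← hcp, ← hp, ← hl, h]
  have h1 : u + v ≠ 0 := by positivity
  have h2 : u * l + v * p ≠ 0 := by positivity
  set m1 : ℝ := u / (u + v) with hm1
  set m2 : ℝ := u * l / (u * l + v * p) with hm2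
  have hMk : M k = (m1, 0) := by rw [hM k]
  have hMkt : M (k + t) = (m2, 0) := by rw [hM (k + t), hckt, hbkt]
  have hmne : m1 ≠ m2 := by
    intro h
    rw [hm1, hm2, div_eq_div_iff h1 h2] at h
    have hz : u * v * (p - l) = 0 := by linear_combination h
    exact mul_ne_zero (mul_ne_zero hupos.ne' hvpos.ne') (sub_ne_zero.2 hpl) hz
  have hcon : p*m2*(1-m1) = l*m1*(1-m2) := by
    rw [hm1, hm2]
    field_simp
    ring
  rw [hMk] at hOA hOM ⊢
  rw [hMkt] at hOM ⊢
  simp only at hOA hOM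
  constructor
  · exact not_collinear_aux xA yA m1 m2 hyA hmne
  · apply key_alg2 xA yA c p l m1 m2 O.1 O.2 hc2 hcon _ _ hyA
    · have hfac : (m2 - m1) * (2 * O.1 - (m1 + m2)) = 0 := by nlinarith [hOM]
      rcases mul_eq_zero.1 hfac with h | h
      · exact absurd (by linarith [sub_eq_zero.1 h]) hmne
      · linarith
    · linear_combination -hOA
end

section
/- Theorem 1(2): Let t, k ∈ ℝ with t ≠ 0 and k ∉ {0, −t}, and set p = b^t, l = c^t. The three points A, M'(k), M'(k+t) are not collinear; let O = (x_O, y_O) be their circumcenter, i.e. the unique point equidistant from all three. Then F⁻_{p,l}(x_O, y_O) = 0; i.e. these circumcenters lie on the same fixed conic F⁻_{p,l} = 0 as in Theorem 1(1). -/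
/-!
With `B = 0` and `|A|² = c²`, the quantity `2 x xA + 2 y yA - c² = |O|² - |O - A|²` is the power of
`B` with respect to the circle through `A` centred at `O = (x, y)`, and `F⁻` is a quadratic polynomial in
`x` and this power. For the circumcircle of `A, (m₁, 0), (m₂, 0)` we have `2x = m₁ + m₂` and power
`m₁ m₂`, so `F⁻(O)` factors as a product of two bilinear expressions in `m₁, m₂`, one for each
orientation of the pair. The points `M'(k)`, `M'(k + t)` satisfy `m₂/(m₂-1) = (c/b)^t · m₁/(m₁-1)`,
which is exactly the vanishing of the second factor.
-/

lemma Fminus_eq (xA yA c p l x y : ℝ) :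
    Fminus xA yA c p l x y =
      (p - l)^2 * ((2*x*xA + 2*y*yA - c^2) - x)^2 - (p + l)^2 * (x^2 - (2*x*xA + 2*y*yA - c^2)) := by
  unfold Fminus
  ring

lemma Fminus_eq_mul_of_circumcenter {xA yA c p l m₁ m₂ x y : ℝ} (hx : 2*x = m₁ + m₂)
    (hpow : 2*x*xA + 2*y*yA - c^2 = m₁ * m₂) :
    Fminus xA yA c p l x y =
      ((p - l)*m₁*m₂ - p*m₁ + l*m₂) * ((p - l)*m₁*m₂ - p*m₂ + l*m₁) := by
  rw [Fminus_eq, hpow]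
  obtain rfl : x = (m₁ + m₂) / 2 := by linarith
  ring

lemma circumcenter_of_mem_axis {xA yA m₁ m₂ x y : ℝ} (hm : m₁ ≠ m₂)
    (hA : (x - xA)^2 + (y - yA)^2 = (x - m₁)^2 + (y - 0)^2)
    (hM : (x - m₁)^2 + (y - 0)^2 = (x - m₂)^2 + (y - 0)^2) :
    2*x = m₁ + m₂ ∧ 2*x*xA + 2*y*yA - (xA^2 + yA^2) = m₁ * m₂ := by
  have hx : 2*x = m₁ + m₂ := by
    have h : (m₂ - m₁) * (2*x - m₁ - m₂) = 0 := by linear_combination hM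
    rcases mul_eq_zero.1 h with h | h
    · exact absurd (sub_eq_zero.1 h).symm hm
    · linarith
  exact ⟨hx, by linear_combination -hA + m₁ * hx⟩

lemma not_collinear_of_apply_ne_zero {k V : Type*} [Field k] [AddCommGroup V] [Module k V]
    (f : V →ₗ[k] k) {P Q R : V} (hQR : Q ≠ R) (hQ : f Q = 0) (hR : f R = 0) (hP : f P ≠ 0) :
    ¬ Collinear k ({P, Q, R} : Set V) := by
  intro h
  have hPQR : P ∈ line[k, Q, R] := h.mem_affineSpan_of_mem_of_ne (by simp) (by simp) (by simp) hQR
  have hle : line[k, Q, R] ≤ (LinearMap.ker f).toAffineSubspace :=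
    affineSpan_le.2 (by simp [Set.insert_subset_iff, hQ, hR])
  exact hP (hle hPQR)

/-- The point of the line `BC` (with `B = 0`, `C = 1`) dividing it in the signed ratio
`BM : MC = u : -v`. -/
noncomputable def divPoint (u v : ℝ) : ℝ := u / (u - v)

lemma divPoint_relation {u v p l : ℝ} (h₁ : u - v ≠ 0) (h₂ : u*l - v*p ≠ 0) :
    (p - l) * divPoint u v * divPoint (u*l) (v*p) - p * divPoint (u*l) (v*p)
      + l * divPoint u v = 0 := by
  have h₂' : l*u - p*v ≠ 0 := by rwa [mul_comm l, mul_comm p]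
  unfold divPoint
  field_simp
  ring

lemma divPoint_ne_divPoint_mul {u v p l : ℝ} (hu : u ≠ 0) (hv : v ≠ 0) (hpl : p ≠ l)
    (h₁ : u - v ≠ 0) (h₂ : u*l - v*p ≠ 0) : divPoint u v ≠ divPoint (u*l) (v*p) := by
  unfold divPoint
  rw [Ne, div_eq_div_iff h₁ h₂]
  intro h
  exact hpl (mul_left_cancel₀ (mul_ne_zero hu hv) (by linear_combination -h))

/-- Theorem 1(2): for fixed span `t ≠ 0` and `k ∉ {0, -t}`, the circumcenter of
`A M'(k) M'(k+t)` lies on the same conic `F⁻_{b^t, c^t} = 0` as in Theorem 1(1),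
and the three points are not collinear. -/
theorem statement1 (xA yA : ℝ) (hyA : yA ≠ 0)
    (b c : ℝ) (hb : b = Real.sqrt ((xA - 1)^2 + yA^2))
    (hc : c = Real.sqrt (xA^2 + yA^2)) (hbc : b ≠ c)
    (t k : ℝ) (ht : t ≠ 0) (hk : k ≠ 0) (hkt : k ≠ -t)
    (p l : ℝ) (hp : p = b ^ t) (hl : l = c ^ t)
    (M' : ℝ → ℝ × ℝ) (hM' : ∀ s : ℝ, M' s = (c ^ s / (c ^ s - b ^ s), 0))
    (O : ℝ × ℝ)
    (hOA : (O.1 - xA)^2 + (O.2 - yA)^2 = (O.1 - (M' k).1)^2 + (O.2 - (M' k).2)^2)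
    (hOM : (O.1 - (M' k).1)^2 + (O.2 - (M' k).2)^2
        = (O.1 - (M' (k + t)).1)^2 + (O.2 - (M' (k + t)).2)^2) :
    ¬ Collinear ℝ ({(xA, yA), M' k, M' (k + t)} : Set (ℝ × ℝ)) ∧
      Fminus xA yA c p l O.1 O.2 = 0 := by
  have hb0 : 0 < b := hb ▸ Real.sqrt_pos.2 (by positivity)
  have hc0 : 0 < c := hc ▸ Real.sqrt_pos.2 (by positivity)
  have hc2 : c^2 = xA^2 + yA^2 := by rw [hc, Real.sq_sqrt (by positivity)]
  have hrpow : ∀ s : ℝ, s ≠ 0 → c ^ s ≠ b ^ s := fun s hs h =>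
    hbc ((Real.rpow_left_inj hb0.le hc0.le hs).1 h.symm)
  have hMk : M' k = (divPoint (c ^ k) (b ^ k), 0) := hM' k
  have hMkt : M' (k + t) = (divPoint (c ^ k * l) (b ^ k * p), 0) := by
    rw [hM', Real.rpow_add hc0, Real.rpow_add hb0, hp, hl]; rfl
  have h₁ : c ^ k - b ^ k ≠ 0 := sub_ne_zero.2 (hrpow k hk)
  have h₂ : c ^ k * l - b ^ k * p ≠ 0 := by
    rw [hp, hl, ← Real.rpow_add hc0, ← Real.rpow_add hb0]
    exact sub_ne_zero.2 (hrpow _ fun h => hkt (by linarith))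
  have hm := divPoint_ne_divPoint_mul (Real.rpow_pos_of_pos hc0 k).ne'
    (Real.rpow_pos_of_pos hb0 k).ne' (hp ▸ hl ▸ (hrpow t ht).symm) h₁ h₂
  rw [hMk] at hOA
  rw [hMk, hMkt] at hOM ⊢
  obtain ⟨hx, hpow⟩ := circumcenter_of_mem_axis hm hOA hOM
  refine ⟨not_collinear_of_apply_ne_zero (LinearMap.snd ℝ ℝ ℝ)
    (fun h => hm (congrArg Prod.fst h)) rfl rfl hyA, ?_⟩
  rw [Fminus_eq_mul_of_circumcenter hx (hc2 ▸ hpow), divPoint_relation h₁ h₂, mul_zero]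
end

section
/- Theorem 1(4), incidence part: Let Z = (0, c²/(2y_A)) and V = (1, b²/(2y_A)). Then for every p, l > 0 one has F⁻_{p,l}(Z) = 0, F⁻_{p,l}(V) = 0, F⁺_{p,l}(Z) = 0 and F⁺_{p,l}(V) = 0; i.e. the points Z and V lie on every conic of the families F⁻ and F⁺. -/
/-- The conic `F⁺_{p,l}(x,y) = 0`: the formula of `F⁻` with the roles of `(p-l)` and
`(p+l)` interchanged. -/
noncomputable def Fplus (xA yA c p l x y : ℝ) : ℝ :=
  4*y^2*yA^2*(p+l)^2 + x*y*yA*(p+l)^2*(8*xA-4)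
    + x^2*((p+l)^2*(2*xA-1)^2 - (p-l)^2)
    - 2*y*yA*(2*c^2*(p+l)^2 - (p-l)^2)
    + x*(-(2*c^2*(p+l)^2*(2*xA-1)) + 2*xA*(p-l)^2)
    + c^2*(c^2*(p+l)^2 - (p-l)^2)

/-- Theorem 1(4), incidence part: the points `Z = (0, c²/(2y_A))` and `V = (1, b²/(2y_A))`
lie on every conic `F⁻_{p,l} = 0` and `F⁺_{p,l} = 0` for all `p, l > 0`. -/
theorem statement3 (xA yA : ℝ) (hyA : yA ≠ 0)
    (b c : ℝ) (hb : b = Real.sqrt ((xA - 1)^2 + yA^2))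
    (hc : c = Real.sqrt (xA^2 + yA^2)) (hbc : b ≠ c)
    (Z V : ℝ × ℝ) (hZ : Z = (0, c^2 / (2*yA))) (hV : V = (1, b^2 / (2*yA)))
    (p l : ℝ) (hp : 0 < p) (hl : 0 < l) :
    Fminus xA yA c p l Z.1 Z.2 = 0 ∧ Fminus xA yA c p l V.1 V.2 = 0 ∧
      Fplus xA yA c p l Z.1 Z.2 = 0 ∧ Fplus xA yA c p l V.1 V.2 = 0 := by
  have hb2 : b^2 = (xA - 1)^2 + yA^2 := by
    rw [hb]; exact Real.sq_sqrt (by positivity)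
  have hc2 : c^2 = xA^2 + yA^2 := by
    rw [hc]; exact Real.sq_sqrt (by positivity)
  subst hZ hV
  simp only [Fminus, Fplus]
  rw [hb2, hc2]
  refine ⟨?_, ?_, ?_, ?_⟩ <;> field_simp <;> ring
end

section
/- Theorem 1(4), tangency part: Let Z = (0, c²/(2y_A)) and V = (1, b²/(2y_A)). For all p, l > 0 with p ≠ l, the gradient of F⁻_{p,l} at Z is a nonzero scalar multiple of the vector (x_A, y_A) = A − B, and the gradient of F⁻_{p,l} at V is a nonzero scalar multiple of (x_A − 1, y_A) = A − C; the same holds for F⁺_{p,l}. Consequently the tangent line to each of these conics at Z is the perpendicular bisector of AB, and at V it is the perpendicular bisector of AC. -/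
/-- The gradient (vector of partial derivatives) of a function `F : ℝ → ℝ → ℝ` at a
point `P` of the plane. -/
noncomputable def gradAt (F : ℝ → ℝ → ℝ) (P : ℝ × ℝ) : ℝ × ℝ :=
  (deriv (fun x => F x P.2) P.1, deriv (fun y => F P.1 y) P.2)

lemma HasDerivAt.sq_of_apply_eq_zero {f : ℝ → ℝ} {f' x : ℝ} (hf : HasDerivAt f f' x)
    (h₀ : f x = 0) : HasDerivAt (fun t => f t ^ 2) 0 x := by
  simpa [h₀] using hf.fun_pow 2

lemma gradAt_sq_sub_of_eq_zero (α β a₁ a₂ k d₁ d₂ e x₀ y₀ : ℝ)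
    (h : a₁ * x₀ + a₂ * y₀ + k = 0) :
    gradAt (fun x y => α * (a₁ * x + a₂ * y + k) ^ 2 - β * (x ^ 2 + d₁ * x + d₂ * y + e))
      (x₀, y₀) = (-β * (2 * x₀ + d₁), -β * d₂) := by
  have hLx : HasDerivAt (fun x => a₁ * x + a₂ * y₀ + k) a₁ x₀ := by
    simpa using (((hasDerivAt_id x₀).const_mul a₁).add_const (a₂ * y₀)).add_const k
  have hLy : HasDerivAt (fun y => a₁ * x₀ + a₂ * y + k) a₂ y₀ := by
    simpa using (((hasDerivAt_id y₀).const_mul a₂).const_add (a₁ * x₀)).add_const k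
  have hMx : HasDerivAt (fun x => x ^ 2 + d₁ * x + d₂ * y₀ + e) (2 * x₀ + d₁) x₀ := by
    simpa using (((hasDerivAt_pow 2 x₀).add ((hasDerivAt_id x₀).const_mul d₁)).add_const
      (d₂ * y₀)).add_const e
  have hMy : HasDerivAt (fun y => x₀ ^ 2 + d₁ * x₀ + d₂ * y + e) d₂ y₀ := by
    simpa using (((hasDerivAt_id y₀).const_mul d₂).const_add (x₀ ^ 2 + d₁ * x₀)).add_const e
  unfold gradAt
  refine Prod.ext ?_ ?_
  · simpa using (((hLx.sq_of_apply_eq_zero h).const_mul α).fun_sub (hMx.const_mul β)).deriv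
  · simpa using (((hLy.sq_of_apply_eq_zero h).const_mul α).fun_sub (hMy.const_mul β)).deriv

lemma Fminus_eq_sq_sub (xA yA c p l : ℝ) :
    (fun x y => Fminus xA yA c p l x y) = fun x y =>
      (p - l) ^ 2 * ((2 * xA - 1) * x + 2 * yA * y + -c ^ 2) ^ 2
        - (p + l) ^ 2 * (x ^ 2 + -2 * xA * x + -2 * yA * y + c ^ 2) := by
  funext x y; unfold Fminus; ring

lemma Fplus_eq_sq_sub (xA yA c p l : ℝ) :
    (fun x y => Fplus xA yA c p l x y) = fun x y =>
      (p + l) ^ 2 * ((2 * xA - 1) * x + 2 * yA * y + -c ^ 2) ^ 2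
        - (p - l) ^ 2 * (x ^ 2 + -2 * xA * x + -2 * yA * y + c ^ 2) := by
  funext x y; unfold Fplus; ring

section OnLine

variable {xA yA c x₀ y₀ : ℝ} (h : (2 * xA - 1) * x₀ + 2 * yA * y₀ + -c ^ 2 = 0) (p l : ℝ)
include h

lemma gradAt_Fminus_of_mem_line :
    gradAt (fun x y => Fminus xA yA c p l x y) (x₀, y₀) = (2 * (p + l) ^ 2) • (xA - x₀, yA) := by
  rw [Fminus_eq_sq_sub, gradAt_sq_sub_of_eq_zero _ _ _ _ _ _ _ _ _ _ h, Prod.smul_mk]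
  congr 1 <;> simp only [smul_eq_mul] <;> ring

lemma gradAt_Fplus_of_mem_line :
    gradAt (fun x y => Fplus xA yA c p l x y) (x₀, y₀) = (2 * (p - l) ^ 2) • (xA - x₀, yA) := by
  rw [Fplus_eq_sq_sub, gradAt_sq_sub_of_eq_zero _ _ _ _ _ _ _ _ _ _ h, Prod.smul_mk]
  congr 1 <;> simp only [smul_eq_mul] <;> ring

end OnLine

theorem statement4_general (xA yA : ℝ) (hyA : yA ≠ 0)
    (b c : ℝ) (hb : b = Real.sqrt ((xA - 1)^2 + yA^2))
    (hc : c = Real.sqrt (xA^2 + yA^2))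
    (Z V : ℝ × ℝ) (hZ : Z = (0, c^2 / (2*yA))) (hV : V = (1, b^2 / (2*yA)))
    (p l : ℝ) (hp : 0 < p) (hl : 0 < l) (hpl : p ≠ l) :
    (∃ s : ℝ, s ≠ 0 ∧ gradAt (fun x y => Fminus xA yA c p l x y) Z = s • ((xA, yA) : ℝ × ℝ)) ∧
    (∃ s : ℝ, s ≠ 0 ∧ gradAt (fun x y => Fminus xA yA c p l x y) V = s • ((xA - 1, yA) : ℝ × ℝ)) ∧
    (∃ s : ℝ, s ≠ 0 ∧ gradAt (fun x y => Fplus xA yA c p l x y) Z = s • ((xA, yA) : ℝ × ℝ)) ∧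
    (∃ s : ℝ, s ≠ 0 ∧ gradAt (fun x y => Fplus xA yA c p l x y) V = s • ((xA - 1, yA) : ℝ × ℝ)) := by
  have hZ_mem : (2 * xA - 1) * 0 + 2 * yA * (c ^ 2 / (2 * yA)) + -c ^ 2 = 0 := by
    field_simp; ring
  have hV_mem : (2 * xA - 1) * 1 + 2 * yA * (b ^ 2 / (2 * yA)) + -c ^ 2 = 0 := by
    rw [hb, hc, Real.sq_sqrt (by positivity), Real.sq_sqrt (by positivity)]
    field_simp; ring
  have hplus : 2 * (p + l) ^ 2 ≠ 0 := by positivity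
  have hminus : 2 * (p - l) ^ 2 ≠ 0 := by have := sub_ne_zero.mpr hpl; positivity
  subst hZ hV
  exact ⟨⟨_, hplus, by rw [gradAt_Fminus_of_mem_line hZ_mem, sub_zero]⟩,
    ⟨_, hplus, gradAt_Fminus_of_mem_line hV_mem p l⟩,
    ⟨_, hminus, by rw [gradAt_Fplus_of_mem_line hZ_mem, sub_zero]⟩,
    ⟨_, hminus, gradAt_Fplus_of_mem_line hV_mem p l⟩⟩

/-- Theorem 1(4), tangency part: at `Z` the gradient of `F⁻_{p,l}` (and of `F⁺_{p,l}`) is a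
nonzero multiple of `A - B`, and at `V` it is a nonzero multiple of `A - C`; hence the
tangent lines there are the perpendicular bisectors of `AB` and `AC`. -/
theorem statement4 (xA yA : ℝ) (hyA : yA ≠ 0)
    (b c : ℝ) (hb : b = Real.sqrt ((xA - 1)^2 + yA^2))
    (hc : c = Real.sqrt (xA^2 + yA^2)) (hbc : b ≠ c)
    (Z V : ℝ × ℝ) (hZ : Z = (0, c^2 / (2*yA))) (hV : V = (1, b^2 / (2*yA)))
    (p l : ℝ) (hp : 0 < p) (hl : 0 < l) (hpl : p ≠ l) :
    (∃ s : ℝ, s ≠ 0 ∧ gradAt (fun x y => Fminus xA yA c p l x y) Z = s • ((xA, yA) : ℝ × ℝ)) ∧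
    (∃ s : ℝ, s ≠ 0 ∧ gradAt (fun x y => Fminus xA yA c p l x y) V = s • ((xA - 1, yA) : ℝ × ℝ)) ∧
    (∃ s : ℝ, s ≠ 0 ∧ gradAt (fun x y => Fplus xA yA c p l x y) Z = s • ((xA, yA) : ℝ × ℝ)) ∧
    (∃ s : ℝ, s ≠ 0 ∧ gradAt (fun x y => Fplus xA yA c p l x y) V = s • ((xA - 1, yA) : ℝ × ℝ)) :=
  statement4_general xA yA hyA b c hb hc Z V hZ hV p l hp hl hpl
end

section
/- Proposition 5.1(2): Let E = (x_E, y_E) ∈ ℝ² and R = dist(E, A). Then exactly one of dist(E, B) < R < dist(E, C) or dist(E, C) < R < dist(E, B) holds if and only if there exist points P = (u, 0) and Q = (v, 0) on the line BC with dist(E, P) = dist(E, Q) = R, 0 < u < 1, and (v < 0 or v > 1); i.e. E lies in R₂ ∪ R₄ exactly when the circle centered at E through A meets both the open segment BC and the line BC outside the segment. -/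
/-!
On the line `BC`, parametrised as `t ↦ (t, 0)`, the circle of radius `R` about `E = (m, y)`
cuts out the roots of the monic quadratic `q t = (m - t)² - (R² - y²)`, and
`q 0 = |EB|² - R²`, `q 1 = |EC|² - R²`. If `q` has roots `u ≠ v` then `q 0 = u v` and
`q 1 = (1 - u)(1 - v)`, so `q 0` and `q 1` have opposite signs exactly when one root lies in
`(0, 1)` and the other outside `[0, 1]`.
-/

/-- Euclidean distance between two points of the Cartesian plane `ℝ × ℝ`. -/
noncomputable def dE (P Q : ℝ × ℝ) : ℝ := Real.sqrt ((P.1 - Q.1)^2 + (P.2 - Q.2)^2)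

lemma dE_nonneg (P Q : ℝ × ℝ) : 0 ≤ dE P Q := Real.sqrt_nonneg _

lemma dE_sq (P Q : ℝ × ℝ) : dE P Q ^ 2 = (P.1 - Q.1)^2 + (P.2 - Q.2)^2 :=
  Real.sq_sqrt (by positivity)

section Quadratic

variable {m k u v : ℝ}

lemma sub_sq_sub_eq_mul_of_roots (hu : (m - u)^2 = k) (hv : (m - v)^2 = k) (huv : u ≠ v)
    (t : ℝ) : (m - t)^2 - k = (t - u) * (t - v) := by
  have hsum : u + v = 2 * m := by
    have h : (v - u) * (u + v - 2 * m) = 0 := by linear_combination hv - hu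
    rcases mul_eq_zero.mp h with h | h
    · exact absurd (sub_eq_zero.mp h).symm huv
    · linarith
  linear_combination hu + (t - u) * hsum

lemma exists_roots_of_sq_lt_of_lt_sq (h0 : m^2 < k) (h1 : k < (m - 1)^2) :
    ∃ u v, 0 < u ∧ u < 1 ∧ v < 0 ∧ (m - u)^2 = k ∧ (m - v)^2 = k := by
  obtain ⟨s, hs0, rfl⟩ : ∃ s, 0 ≤ s ∧ s^2 = k :=
    ⟨√k, Real.sqrt_nonneg k, Real.sq_sqrt (by nlinarith)⟩
  obtain ⟨hm_lo, hm_hi⟩ := abs_lt.mp (abs_lt_of_sq_lt_sq h0 hs0)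
  exact ⟨m + s, m - s, by linarith, by nlinarith, by linarith, by ring, by ring⟩

lemma exists_roots_mem_Ioo_and_notMem_Icc_iff :
    ((m^2 < k ∧ k < (m - 1)^2) ∨ ((m - 1)^2 < k ∧ k < m^2)) ↔
      ∃ u v, 0 < u ∧ u < 1 ∧ (v < 0 ∨ v > 1) ∧ (m - u)^2 = k ∧ (m - v)^2 = k := by
  constructor
  · rintro (⟨h0, h1⟩ | ⟨h1, h0⟩)
    · obtain ⟨u, v, hu0, hu1, hv, hu, hv'⟩ := exists_roots_of_sq_lt_of_lt_sq h0 h1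
      exact ⟨u, v, hu0, hu1, Or.inl hv, hu, hv'⟩
    · -- reflect the unit interval through `t ↦ 1 - t`
      obtain ⟨u, v, hu0, hu1, hv, hu, hv'⟩ :=
        exists_roots_of_sq_lt_of_lt_sq (m := 1 - m) (k := k) (by linear_combination h1)
          (by linear_combination h0)
      refine ⟨1 - u, 1 - v, by linarith, by linarith, Or.inr (by linarith), ?_, ?_⟩
      · linear_combination hu
      · linear_combination hv'
  · rintro ⟨u, v, hu0, hu1, hv, hu, hv'⟩
    have huv : u ≠ v := by rintro rfl; rcases hv with h | h <;> linarith
    have hq0 := sub_sq_sub_eq_mul_of_roots hu hv' huv 0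
    have hq1 := sub_sq_sub_eq_mul_of_roots hu hv' huv 1
    rw [sub_zero] at hq0
    rcases hv with h | h
    · have : u * v < 0 := mul_neg_of_pos_of_neg hu0 h
      have : 0 < (1 - u) * (1 - v) := mul_pos (by linarith) (by linarith)
      left; constructor <;> nlinarith
    · have : 0 < u * v := mul_pos hu0 (by linarith)
      have : (1 - u) * (1 - v) < 0 := mul_neg_of_pos_of_neg (by linarith) (by linarith)
      right; constructor <;> nlinarith

end Quadratic

theorem statement11_general (xA yA : ℝ)
    (E : ℝ × ℝ) (R : ℝ) (hR : R = dE E (xA, yA)) :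
    ((dE E (0, 0) < R ∧ R < dE E (1, 0)) ∨ (dE E (1, 0) < R ∧ R < dE E (0, 0))) ↔
      ∃ u v : ℝ, 0 < u ∧ u < 1 ∧ (v < 0 ∨ v > 1) ∧ dE E (u, 0) = R ∧ dE E (v, 0) = R := by
  have hR0 : 0 ≤ R := hR ▸ dE_nonneg _ _
  have hsq (t : ℝ) : dE E (t, 0) ^ 2 = (E.1 - t)^2 + E.2^2 := by simp [dE_sq]
  have hlt (t : ℝ) : dE E (t, 0) < R ↔ (E.1 - t)^2 < R^2 - E.2^2 := by
    rw [← pow_lt_pow_iff_left₀ (dE_nonneg _ _) hR0 two_ne_zero, hsq, lt_sub_iff_add_lt]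
  have hgt (t : ℝ) : R < dE E (t, 0) ↔ R^2 - E.2^2 < (E.1 - t)^2 := by
    rw [← pow_lt_pow_iff_left₀ hR0 (dE_nonneg _ _) two_ne_zero, hsq, sub_lt_iff_lt_add]
  have heq (t : ℝ) : dE E (t, 0) = R ↔ (E.1 - t)^2 = R^2 - E.2^2 := by
    rw [← sq_eq_sq₀ (dE_nonneg _ _) hR0, hsq, eq_sub_iff_add_eq]
  simp only [hlt, hgt, heq, sub_zero]
  exact exists_roots_mem_Ioo_and_notMem_Icc_iff

/-- Proposition 5.1(2): `E` is strictly closer to exactly one of `B`, `C` than to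
`A` (i.e. `E ∈ R₂ ∪ R₄`) iff the circle centered at `E` through `A` meets both the
open segment `BC` and the line `BC` outside the segment. -/
theorem statement11 (xA yA : ℝ) (hyA : yA ≠ 0)
    (b c : ℝ) (hb : b = Real.sqrt ((xA - 1)^2 + yA^2))
    (hc : c = Real.sqrt (xA^2 + yA^2)) (hbc : b ≠ c)
    (E : ℝ × ℝ) (R : ℝ) (hR : R = dE E (xA, yA)) :
    ((dE E (0, 0) < R ∧ R < dE E (1, 0)) ∨ (dE E (1, 0) < R ∧ R < dE E (0, 0))) ↔
      ∃ u v : ℝ, 0 < u ∧ u < 1 ∧ (v < 0 ∨ v > 1) ∧ dE E (u, 0) = R ∧ dE E (v, 0) = R :=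
  statement11_general xA yA E R hR
end

section
/- Proposition 5.1(5): Let E = (x_E, y_E) ∈ ℝ² with R = dist(E, A), and suppose dist(E, A) < dist(E, B), dist(E, A) < dist(E, C) (E lies in the region R₁), R > |y_E| (E is strictly outside the parabola with focus A and directrix BC), and x_E < 0 or x_E > 1 (E lies in U₂ ∪ U₃). Then the circle centered at E through A meets the line BC in exactly two distinct points, and every point (u, 0) with dist(E, (u,0)) = R satisfies u < 0 or u > 1; i.e. both intersection points lie in m', outside the segment BC. -/
private lemma sq_lt_aux (d x : ℝ) (hd : 0 ≤ d) (hx : 0 < x) (h : d ^ 2 < x ^ 2) :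
    d < x := by nlinarith

set_option maxHeartbeats 1000000 in
/-- Proposition 5.1(5): if `E ∈ R₁` (strictly closer to `A` than to `B` and `C`),
`E` is strictly outside the parabola with focus `A` and directrix `BC`, and
`x_E < 0` or `x_E > 1` (so `E ∈ U₂ ∪ U₃`), then the circle centered at `E` through
`A` meets the line `BC` in exactly two points, both lying outside the segment `BC`. -/
theorem statement12 (xA yA : ℝ) (hyA : yA ≠ 0)
    (b c : ℝ) (hb : b = Real.sqrt ((xA - 1)^2 + yA^2))
    (hc : c = Real.sqrt (xA^2 + yA^2)) (hbc : b ≠ c)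
    (E : ℝ × ℝ) (R : ℝ) (hR : R = dE E (xA, yA))
    (hB : dE E (xA, yA) < dE E (0, 0)) (hC : dE E (xA, yA) < dE E (1, 0))
    (hout : R > |E.2|) (hU : E.1 < 0 ∨ E.1 > 1) :
    (∃ u v : ℝ, u ≠ v ∧ dE E (u, 0) = R ∧ dE E (v, 0) = R ∧
      ∀ w : ℝ, dE E (w, 0) = R → w = u ∨ w = v) ∧
    (∀ u : ℝ, dE E (u, 0) = R → u < 0 ∨ u > 1) := by
  have hRpos : 0 < R := lt_of_le_of_lt (abs_nonneg _) hout
  -- R² = squared distance to A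
  have hRA : R ^ 2 = (E.1 - xA) ^ 2 + (E.2 - yA) ^ 2 := by
    rw [hR]; unfold dE
    exact Real.sq_sqrt (by positivity)
  have hsq : R ^ 2 - E.2 ^ 2 > 0 := by
    have := sq_abs E.2
    nlinarith [abs_nonneg E.2]
  obtain ⟨d, hdpos, hd2⟩ : ∃ d : ℝ, 0 < d ∧ d ^ 2 = R ^ 2 - E.2 ^ 2 :=
    ⟨Real.sqrt (R ^ 2 - E.2 ^ 2), Real.sqrt_pos.mpr hsq, Real.sq_sqrt hsq.le⟩
  -- squared distance comparisons from R₁ membership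
  have hB2 : R ^ 2 < E.1 ^ 2 + E.2 ^ 2 := by
    have h1 : dE E (0, 0) ^ 2 = E.1 ^ 2 + E.2 ^ 2 := by
      unfold dE; rw [Real.sq_sqrt (by positivity)]; ring
    have h2 : R < dE E (0, 0) := hR ▸ hB
    nlinarith [Real.sqrt_nonneg ((E.1 - (0:ℝ)) ^ 2 + (E.2 - (0:ℝ)) ^ 2)]
  have hC2 : R ^ 2 < (E.1 - 1) ^ 2 + E.2 ^ 2 := by
    have h1 : dE E (1, 0) ^ 2 = (E.1 - 1) ^ 2 + E.2 ^ 2 := by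
      unfold dE; rw [Real.sq_sqrt (by positivity)]; ring
    have h2 : R < dE E (1, 0) := hR ▸ hC
    nlinarith [Real.sqrt_nonneg ((E.1 - (1:ℝ)) ^ 2 + (E.2 - (0:ℝ)) ^ 2)]
  have hdB : d ^ 2 < E.1 ^ 2 := by nlinarith
  have hdC : d ^ 2 < (E.1 - 1) ^ 2 := by nlinarith
  -- characterization of points on circle ∩ line
  have key : ∀ w : ℝ, dE E (w, 0) = R ↔ (E.1 - w) ^ 2 = d ^ 2 := by
    intro w
    unfold dE
    have h0 : (E.2 - 0) ^ 2 = E.2 ^ 2 := by ring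
    constructor
    · intro h
      have h1 := Real.sq_sqrt (show (0:ℝ) ≤ (E.1 - w) ^ 2 + (E.2 - 0) ^ 2 by positivity)
      rw [h] at h1
      linarith
    · intro h
      have h1 : (E.1 - w) ^ 2 + (E.2 - 0) ^ 2 = R ^ 2 := by linarith
      rw [h1, Real.sqrt_sq hRpos.le]
  have hroot : ∀ w : ℝ, dE E (w, 0) = R → w = E.1 + d ∨ w = E.1 - d := by
    intro w hw
    have h := (key w).mp hw
    have : (w - (E.1 + d)) * (w - (E.1 - d)) = 0 := by linear_combination h
    rcases mul_eq_zero.mp this with h' | h'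
    · left; linarith
    · right; linarith
  constructor
  · refine ⟨E.1 + d, E.1 - d, by intro h; linarith, ?_, ?_, hroot⟩
    · exact (key _).mpr (by ring)
    · exact (key _).mpr (by ring)
  · intro u hu
    rcases hroot u hu with h | h <;> rcases hU with h1 | h1
    · left
      have := sq_lt_aux d (-E.1) hdpos.le (by linarith) ((neg_sq E.1).symm ▸ hdB)
      linarith
    · right
      have := sq_lt_aux d (E.1 - 1) hdpos.le (by linarith) hdC
      linarith
    · left
      have := sq_lt_aux d (-E.1) hdpos.le (by linarith) ((neg_sq E.1).symm ▸ hdB)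
      linarith
    · right
      have := sq_lt_aux d (E.1 - 1) hdpos.le (by linarith) hdC
      linarith
end

section
/- Proposition 5.1(6): Let E = (x_E, y_E) ∈ ℝ² with R = dist(E, A), and suppose dist(E, A) < dist(E, B), dist(E, A) < dist(E, C) (E lies in the region R₁), R > |y_E| (E is strictly outside the parabola with focus A and directrix BC), and 0 ≤ x_E ≤ 1 (so E lies in U₄). Then the circle centered at E through A meets the line BC in exactly two distinct points, and every point (u, 0) with dist(E, (u,0)) = R satisfies 0 ≤ u ≤ 1; i.e. both intersection points lie in the segment BC. -/
/-- Proposition 5.1(6): if `E ∈ R₁` (strictly closer to `A` than to `B` and `C`),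
`E` is strictly outside the parabola with focus `A` and directrix `BC`, and
`0 ≤ x_E ≤ 1` (so `E ∈ U₄`), then the circle centered at `E` through `A` meets the
line `BC` in exactly two points, both lying in the segment `BC`. -/
theorem statement13 (xA yA : ℝ) (hyA : yA ≠ 0)
    (b c : ℝ) (hb : b = Real.sqrt ((xA - 1)^2 + yA^2))
    (hc : c = Real.sqrt (xA^2 + yA^2)) (hbc : b ≠ c)
    (E : ℝ × ℝ) (R : ℝ) (hR : R = dE E (xA, yA))
    (hB : dE E (xA, yA) < dE E (0, 0)) (hC : dE E (xA, yA) < dE E (1, 0))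
    (hout : R > |E.2|) (hU : 0 ≤ E.1 ∧ E.1 ≤ 1) :
    (∃ u v : ℝ, u ≠ v ∧ dE E (u, 0) = R ∧ dE E (v, 0) = R ∧
      ∀ w : ℝ, dE E (w, 0) = R → w = u ∨ w = v) ∧
    (∀ u : ℝ, dE E (u, 0) = R → 0 ≤ u ∧ u ≤ 1) := by
  obtain ⟨hU0, hU1⟩ := hU
  have hRnn : 0 ≤ R := le_trans (abs_nonneg _) (le_of_lt hout)
  have hRpos : 0 < R := lt_of_le_of_lt (abs_nonneg _) hout
  -- key characterization of points on the circle on the x-axis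
  have hkey : ∀ w : ℝ, dE E (w, 0) = R ↔ (E.1 - w)^2 + E.2^2 = R^2 := by
    intro w
    unfold dE
    constructor
    · intro h
      have hnn : 0 ≤ (E.1 - w)^2 + (E.2 - 0)^2 := by positivity
      have := Real.sq_sqrt hnn
      rw [h] at this
      simpa using this.symm
    · intro h
      have : (E.1 - w)^2 + (E.2 - 0)^2 = R^2 := by simpa using h
      rw [this, Real.sqrt_sq hRnn]
  -- R^2 - E.2^2 > 0
  have hsq : E.2^2 < R^2 := by nlinarith [sq_abs E.2, abs_nonneg E.2]
  obtain ⟨d, hdpos, hd2⟩ : ∃ d : ℝ, 0 < d ∧ d^2 = R^2 - E.2^2 :=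
    ⟨Real.sqrt (R^2 - E.2^2), Real.sqrt_pos.mpr (by linarith),
      Real.sq_sqrt (by linarith)⟩
  have hBlt : R^2 < E.1^2 + E.2^2 := by
    have h2 : R^2 < (dE E (0,0))^2 :=
      pow_lt_pow_left₀ (by rw [hR]; exact hB) hRnn (by norm_num)
    have h1 : (dE E (0,0))^2 = E.1^2 + E.2^2 := by
      unfold dE
      rw [Real.sq_sqrt (by positivity)]; ring
    linarith
  have hClt : R^2 < (E.1 - 1)^2 + E.2^2 := by
    have h2 : R^2 < (dE E (1,0))^2 :=
      pow_lt_pow_left₀ (by rw [hR]; exact hC) hRnn (by norm_num)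
    have h1 : (dE E (1,0))^2 = (E.1 - 1)^2 + E.2^2 := by
      unfold dE
      rw [Real.sq_sqrt (by positivity)]; ring
    linarith
  have hdltx : d < E.1 := by
    apply lt_of_pow_lt_pow_left₀ 2 hU0
    nlinarith
  have hdlt1x : d < 1 - E.1 := by
    apply lt_of_pow_lt_pow_left₀ 2 (by linarith)
    nlinarith
  constructor
  · refine ⟨E.1 - d, E.1 + d, by intro h; linarith, ?_, ?_, ?_⟩
    · rw [hkey]; linear_combination hd2
    · rw [hkey]; linear_combination hd2
    · intro w hw
      rw [hkey] at hw
      have : (E.1 - w - d) * (E.1 - w + d) = 0 := by linear_combination hw - hd2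
      rcases mul_eq_zero.mp this with h | h
      · left; linarith
      · right; linarith
  · intro u hu
    rw [hkey] at hu
    have h1 : (E.1 - u)^2 = d^2 := by linear_combination hu - hd2
    constructor
    · nlinarith
    · nlinarith
end

section
/- Lemma 4.2 (monotonicity of the value along a ray): Let f(x) = a x² + b x + c with a > 0 and let Γ = {(x, f(x)) : x ∈ ℝ} be its graph. Let L = (x_L, y_L) be a point with y_L > f(x_L) (strictly inside the parabola), and let P = (x_P, f(x_P)) ∈ Γ with y_L ≤ f(x_P). Let X and Y be points of the ray {P + s·(P − L) : s ≥ 0} with dist(P, X) < dist(P, Y). Suppose X' ∈ Γ satisfies (X' − X) · (P − L) = 0 and dist(X, X') ≤ dist(X, Q) for every Q ∈ Γ with (Q − X) · (P − L) = 0, and that Y' ∈ Γ satisfies the analogous two conditions with Y in place of X. Then dist(X, X') < dist(Y, Y'). -/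
/-- Standard dot product on the Cartesian plane `ℝ × ℝ`. -/
def dot (P Q : ℝ × ℝ) : ℝ := P.1 * Q.1 + P.2 * Q.2

lemma sqrt_scale (k p q : ℝ) (hk : 0 ≤ k) :
    Real.sqrt ((k*p)^2 + (k*q)^2) = k * Real.sqrt (p^2 + q^2) := by
  rw [show (k*p)^2 + (k*q)^2 = k^2 * (p^2+q^2) by ring, Real.sqrt_mul (sq_nonneg k),
    Real.sqrt_sq hk]

/-- Lemma 4.2: along the ray `e` from `P` in direction `P - L` (where `L` is strictly
inside the parabola `Γ = graph of f`, `P ∈ Γ`, and the `y`-coordinate of `L` is at most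
that of `P`), the "value" of a point `S ∈ e` — the distance from `S` to the closest point
of `Γ` on the line through `S` perpendicular to `e` — is strictly increasing in `|PS|`. -/
theorem statement15 (a b c : ℝ) (ha : 0 < a)
    (f : ℝ → ℝ) (hf : ∀ x : ℝ, f x = a*x^2 + b*x + c)
    (xL yL xP : ℝ) (hL : f xL < yL) (hP : yL ≤ f xP)
    (L P X Y X' Y' : ℝ × ℝ)
    (hLdef : L = (xL, yL)) (hPdef : P = (xP, f xP))
    (hX : ∃ s : ℝ, 0 ≤ s ∧ X = P + s • (P - L))
    (hY : ∃ s : ℝ, 0 ≤ s ∧ Y = P + s • (P - L))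
    (hXY : dE P X < dE P Y)
    (hX'Γ : X'.2 = f X'.1)
    (hX'perp : dot (X' - X) (P - L) = 0)
    (hX'min : ∀ Q : ℝ × ℝ, Q.2 = f Q.1 → dot (Q - X) (P - L) = 0 → dE X X' ≤ dE X Q)
    (hY'Γ : Y'.2 = f Y'.1)
    (hY'perp : dot (Y' - Y) (P - L) = 0)
    (hY'min : ∀ Q : ℝ × ℝ, Q.2 = f Q.1 → dot (Q - Y) (P - L) = 0 → dE Y Y' ≤ dE Y Q) :
    dE X X' < dE Y Y' := by
  obtain ⟨s, hs0, hXdef⟩ := hX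
  obtain ⟨t, ht0, hYdef⟩ := hY
  obtain ⟨d₁, hd1⟩ : ∃ x : ℝ, x = xP - xL := ⟨_, rfl⟩
  obtain ⟨d₂, hd2⟩ : ∃ x : ℝ, x = f xP - yL := ⟨_, rfl⟩
  have hX1 : X.1 = xP + s * d₁ := by rw [hXdef, hPdef, hLdef, hd1]; simp
  have hX2 : X.2 = f xP + s * d₂ := by rw [hXdef, hPdef, hLdef, hd2]; simp
  have hY1 : Y.1 = xP + t * d₁ := by rw [hYdef, hPdef, hLdef, hd1]; simp
  have hY2 : Y.2 = f xP + t * d₂ := by rw [hYdef, hPdef, hLdef, hd2]; simp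
  have hd1ne : d₁ ≠ 0 := by
    intro h
    have hxx : xL = xP := by rw [h] at hd1; linarith
    rw [hxx] at hL; linarith
  obtain ⟨β, hβdef⟩ : ∃ x : ℝ, x = d₁*(2*a*xP + b) - d₂ := ⟨_, rfl⟩
  have hβ : a * d₁^2 < β := by
    have h1 : f xL - yL = a*d₁^2 - β := by
      rw [hβdef, hd1, hd2, hf xL, hf xP]; ring
    linarith
  have hd1sq : 0 ≤ a * d₁^2 := by positivity
  have hβpos : 0 < β := lt_of_le_of_lt hd1sq hβ
  have houtX : f X.1 - X.2 = s * (a*d₁^2*s + β) := by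
    rw [hX1, hX2, hf (xP + s*d₁), hf xP, hβdef, hd2, hf xP]; ring
  have hXout : 0 ≤ f X.1 - X.2 := by
    rw [houtX]
    have h2 : 0 ≤ a*d₁^2*s + β := by nlinarith
    positivity
  have hD : 0 < Real.sqrt (d₁^2 + d₂^2) := by
    apply Real.sqrt_pos.2
    positivity
  have hdPX : dE P X = s * Real.sqrt (d₁^2 + d₂^2) := by
    have h1 : P.1 - X.1 = s * (-d₁) := by rw [hX1, hPdef]; ring
    have h2 : P.2 - X.2 = s * (-d₂) := by rw [hX2, hPdef]; ring
    rw [dE, h1, h2, sqrt_scale _ _ _ hs0]; ring_nf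
  have hdPY : dE P Y = t * Real.sqrt (d₁^2 + d₂^2) := by
    have h1 : P.1 - Y.1 = t * (-d₁) := by rw [hY1, hPdef]; ring
    have h2 : P.2 - Y.2 = t * (-d₂) := by rw [hY2, hPdef]; ring
    rw [dE, h1, h2, sqrt_scale _ _ _ ht0]; ring_nf
  have hst : s < t := by
    rw [hdPX, hdPY] at hXY
    exact lt_of_mul_lt_mul_right hXY hD.le
  have htpos : 0 < t := lt_of_le_of_lt hs0 hst
  have hYout : 0 < f Y.1 - Y.2 := by
    have h1 : f Y.1 - Y.2 = t * (a*d₁^2*t + β) := by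
      rw [hY1, hY2, hf (xP + t*d₁), hf xP, hβdef, hd2, hf xP]; ring
    rw [h1]
    have h2 : 0 < a*d₁^2*t + β := by nlinarith
    positivity
  have hYY'pos : 0 < dE Y Y' := by
    rw [dE]
    apply Real.sqrt_pos.2
    rcases eq_or_ne Y.1 Y'.1 with h1 | h1
    · have h2 : Y.2 ≠ Y'.2 := by
        intro h2
        rw [hY'Γ, ← h1] at h2; linarith
      have h3 := sub_ne_zero_of_ne h2
      have h4 : (Y.2 - Y'.2)^2 > 0 := by positivity
      linarith [sq_nonneg (Y.1 - Y'.1)]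
    · have h3 := sub_ne_zero_of_ne h1
      have h4 : (Y.1 - Y'.1)^2 > 0 := by positivity
      linarith [sq_nonneg (Y.2 - Y'.2)]
  obtain ⟨lam, hlamt⟩ : ∃ lam : ℝ, lam * t = s := ⟨s / t, by field_simp⟩
  have hlam0 : 0 ≤ lam := by
    rcases le_or_gt 0 lam with h | h
    · exact h
    · exfalso
      have := mul_neg_of_neg_of_pos h htpos
      rw [hlamt] at this; linarith
  have hlam1 : lam < 1 := by
    have h : lam * t < 1 * t := by rw [hlamt, one_mul]; exact hst
    exact lt_of_mul_lt_mul_right h htpos.le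
  obtain ⟨z1, hz1⟩ : ∃ x : ℝ, x = X.1 + lam * (Y'.1 - Y.1) := ⟨_, rfl⟩
  obtain ⟨z2, hz2⟩ : ∃ x : ℝ, x = X.2 + lam * (Y'.2 - Y.2) := ⟨_, rfl⟩
  have hz1' : z1 = (1 - lam) * xP + lam * Y'.1 := by
    rw [hz1, hX1, hY1]; linear_combination (-d₁) * hlamt
  have hz2' : z2 = (1 - lam) * f xP + lam * f Y'.1 := by
    rw [hz2, hX2, hY2, hY'Γ]; linear_combination (-d₂) * hlamt
  have hZbelow : f z1 - z2 ≤ 0 := by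
    rw [hz1', hz2', hf ((1-lam)*xP + lam*Y'.1), hf xP, hf Y'.1]
    have hnn : 0 ≤ a * (lam * (1 - lam)) * (xP - Y'.1)^2 :=
      mul_nonneg (mul_nonneg ha.le (mul_nonneg hlam0 (by linarith))) (sq_nonneg _)
    have hid : a*((1-lam)*xP + lam*Y'.1)^2 + b*((1-lam)*xP + lam*Y'.1) + c
        - ((1-lam)*(a*xP^2+b*xP+c) + lam*(a*Y'.1^2+b*Y'.1+c))
        = -(a*(lam*(1-lam))*(xP-Y'.1)^2) := by ring
    linarith [hid, hnn]
  obtain ⟨h, hh⟩ : ∃ h : ℝ → ℝ, h = fun u => f (X.1 + u * (z1 - X.1)) - (X.2 + u * (z2 - X.2)) :=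
    ⟨_, rfl⟩
  have hcont : Continuous h := by
    have he : h = fun u => a*(X.1 + u * (z1 - X.1))^2 + b*(X.1 + u * (z1 - X.1)) + c
        - (X.2 + u * (z2 - X.2)) := by
      funext u; rw [hh]; simp only; rw [hf]
    rw [he]; fun_prop
  have h0 : 0 ≤ h 0 := by rw [hh]; simpa using hXout
  have h1 : h 1 ≤ 0 := by rw [hh]; simpa using hZbelow
  have hmem : (0:ℝ) ∈ Set.Icc (h 1) (h 0) := ⟨h1, h0⟩
  obtain ⟨u₀, ⟨hu00, hu01⟩, hu0⟩ :=
    intermediate_value_Icc' (zero_le_one) hcont.continuousOn hmem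
  obtain ⟨W, hW⟩ : ∃ W : ℝ × ℝ, W = (X.1 + u₀ * (z1 - X.1), X.2 + u₀ * (z2 - X.2)) := ⟨_, rfl⟩
  have hWΓ : W.2 = f W.1 := by
    rw [hW]
    have h5 : h u₀ = 0 := hu0
    rw [hh] at h5; simp only at h5
    simp only
    linarith
  have hWperp : dot (W - X) (P - L) = 0 := by
    have hperpY : (Y'.1 - Y.1) * (P.1 - L.1) + (Y'.2 - Y.2) * (P.2 - L.2) = 0 := by
      simpa [dot] using hY'perp
    simp only [dot, hW, Prod.fst_sub, Prod.snd_sub, hz1, hz2]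
    linear_combination (u₀ * lam) * hperpY
  have hXle : dE X X' ≤ dE X W := hX'min W hWΓ hWperp
  have hdXW : dE X W = u₀ * lam * dE Y Y' := by
    have e1 : X.1 - W.1 = (u₀*lam) * (Y.1 - Y'.1) := by
      rw [hW]; simp only; rw [hz1]; ring
    have e2 : X.2 - W.2 = (u₀*lam) * (Y.2 - Y'.2) := by
      rw [hW]; simp only; rw [hz2]; ring
    rw [dE, e1, e2, sqrt_scale _ _ _ (mul_nonneg hu00 hlam0)]
    rw [dE]
  calc dE X X' ≤ dE X W := hXle
    _ = u₀ * lam * dE Y Y' := hdXW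
    _ ≤ lam * dE Y Y' := by
        rw [mul_assoc]
        exact mul_le_of_le_one_left (mul_nonneg hlam0 hYY'pos.le) hu01
    _ < dE Y Y' := mul_lt_of_lt_one_left hYY'pos hlam1
end

section
/- Lemma 4.3: Let ℓ be a line in ℝ² and A a point with A ∉ ℓ, and let G = {P : dist(P, A) = infDist(P, ℓ)} be the parabola with focus A and directrix ℓ. Let F₁ ≠ F₂ be points of ℝ² and let a ∈ ℝ satisfy 0 < 2a < dist(F₁, F₂), and let H = {P : |dist(P, F₁) − dist(P, F₂)| = 2a} be the (non-degenerate) hyperbola with foci F₁, F₂. If H ∩ G = ∅, then no point of H is strictly inside G; i.e. every P ∈ H satisfies dist(P, A) ≥ infDist(P, ℓ). -/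
/-!
Suppose a point `P₀` of `H` lies strictly inside `G`. Writing `M`, `e`, `c` for the centre, the
unit axis and half the focal distance, and `J` for the rotation by a right angle, the branch of `H`
through `P₀` is the curve `s ↦ M + a cosh s • e + b sinh s • J e` with `b² = c² - a²`. Along it the
distance to the far focus is exactly `c cosh s + a`, whereas the distance to the directrix is at
most `|α + u cosh s + w sinh s|` with `|u| ≤ a` and `|w| ≤ b`. Going out along the end of the branch
where `u cosh s` and `w sinh s` have opposite signs, the latter is `≤ max a b · cosh s + const`, and
`max a b < c`; so far out the branch is outside `G`, and by the intermediate value theorem it meets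
`G`, contradicting `H ∩ G = ∅`.
-/

open Real Metric Module
open scoped RealInnerProductSpace EuclideanSpace

theorem abs_add_le_of_mul_nonpos {p q μ : ℝ} (hp : |p| ≤ μ) (hq : |q| ≤ μ)
    (h : p * q ≤ 0) : |p + q| ≤ μ := by
  rw [abs_le] at *
  rcases le_total 0 p with hp0 | hp0 <;> rcases le_total 0 q with hq0 | hq0 <;>
    constructor <;> nlinarith

theorem abs_sinh_le_cosh (s : ℝ) : |sinh s| ≤ cosh s := by
  rw [abs_sinh, ← cosh_abs]; exact (sinh_lt_cosh _).le

theorem abs_mul_cosh_add_mul_sinh_le {u w μ s : ℝ} (hu : |u| ≤ μ) (hw : |w| ≤ μ)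
    (h : u * w * sinh s ≤ 0) : |u * cosh s + w * sinh s| ≤ μ * cosh s := by
  have hcosh := cosh_pos s
  refine abs_add_le_of_mul_nonpos ?_ ?_ ?_
  · rw [abs_mul, abs_of_pos hcosh]; exact mul_le_mul_of_nonneg_right hu hcosh.le
  · rw [abs_mul]
    exact mul_le_mul hw (abs_sinh_le_cosh s) (abs_nonneg _) ((abs_nonneg _).trans hu)
  · nlinarith

theorem exists_abs_mul_cosh_add_mul_sinh_add_lt {u w c : ℝ} (hu : |u| < c) (hw : |w| < c)
    (K : ℝ) : ∃ s, |u * cosh s + w * sinh s| + K < c * cosh s := by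
  set μ := max |u| |w|
  have hμc : μ < c := max_lt hu hw
  set t := arcosh (max 1 (K / (c - μ) + 1))
  have hKt : K < (c - μ) * cosh t := by
    rw [cosh_arcosh (le_max_left _ _), ← div_lt_iff₀' (sub_pos.2 hμc)]
    exact (lt_add_one _).trans_le (le_max_right _ _)
  obtain ⟨s, hs, hst⟩ : ∃ s, u * w * sinh s ≤ 0 ∧ cosh s = cosh t := by
    rcases le_total (u * w * sinh t) 0 with h | h
    · exact ⟨t, h, rfl⟩
    · exact ⟨-t, by rw [sinh_neg]; linarith, cosh_neg t⟩
  refine ⟨s, ?_⟩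
  have := abs_mul_cosh_add_mul_sinh_le (le_max_left _ _) (le_max_right _ _) hs
  rw [hst] at this ⊢
  linarith

theorem exists_mul_cosh_eq_and_mul_sinh_eq {a b x y : ℝ} (ha : 0 < a) (hb : 0 < b)
    (hx : 0 < x) (h : (x / a) ^ 2 - (y / b) ^ 2 = 1) : ∃ s, a * cosh s = x ∧ b * sinh s = y := by
  refine ⟨arsinh (y / b), ?_, by rw [sinh_arsinh]; field_simp⟩
  rw [cosh_arsinh, show 1 + (y / b) ^ 2 = (x / a) ^ 2 by linarith, sqrt_sq (by positivity)]
  field_simp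

theorem hyperbola_eq_of_focal_dist_sub_eq {a b c x y d₁ d₂ : ℝ} (ha : 0 < a) (hc : 0 < c)
    (hb : b ^ 2 = c ^ 2 - a ^ 2) (hb0 : 0 < b)
    (h₁ : d₁ ^ 2 = (x + c) ^ 2 + y ^ 2) (h₂ : d₂ ^ 2 = (x - c) ^ 2 + y ^ 2) (hd₂ : 0 ≤ d₂)
    (h : d₁ - d₂ = 2 * a) : 0 < x ∧ (x / a) ^ 2 - (y / b) ^ 2 = 1 := by
  have hd₂x : a * d₂ = c * x - a ^ 2 := by
    have : d₁ = d₂ + 2 * a := by linarith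
    subst this; nlinarith
  refine ⟨by nlinarith, ?_⟩
  have : (c * x - a ^ 2) ^ 2 = a ^ 2 * ((x - c) ^ 2 + y ^ 2) := by rw [← hd₂x, ← h₂]; ring
  field_simp
  linear_combination this + (x ^ 2 - a ^ 2) * hb

theorem AffineSubspace.exists_mem_and_unit_mem_direction {E : Type*} [NormedAddCommGroup E]
    [NormedSpace ℝ E] {ℓ : AffineSubspace ℝ E} (hℓ : ℓ.direction ≠ ⊥) :
    ∃ Q ∈ ℓ, ∃ d ∈ ℓ.direction, ‖d‖ = 1 := by
  obtain ⟨Q, hQ⟩ : (ℓ : Set E).Nonempty := by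
    rw [Set.nonempty_iff_ne_empty, Ne, AffineSubspace.coe_eq_bot_iff]
    rintro rfl
    exact hℓ (AffineSubspace.direction_bot ..)
  obtain ⟨v, hv, hv0⟩ := Submodule.exists_mem_ne_zero_of_ne_bot hℓ
  exact ⟨Q, hQ, ‖v‖⁻¹ • v, ℓ.direction.smul_mem _ hv, norm_smul_inv_norm hv0⟩

namespace Orientation

variable {E : Type*} [NormedAddCommGroup E] [InnerProductSpace ℝ E] [Fact (finrank ℝ E = 2)]
  (o : Orientation ℝ E (Fin 2))

local notation "J" => o.rightAngleRotation

theorem inner_smul_add_inner_rightAngleRotation_smul {e : E} (he : ‖e‖ = 1) (v : E) :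
    ⟪e, v⟫ • e + ⟪J e, v⟫ • J e = v := by
  refine ext_inner_right ℝ fun y => ?_
  have := o.inner_mul_inner_add_areaForm_mul_areaForm e v y
  rw [he, one_pow, one_mul] at this
  simpa only [inner_add_left, real_inner_smul_left, o.inner_rightAngleRotation_left] using this

theorem norm_sq_eq_inner_sq_add_inner_rightAngleRotation_sq {e : E} (he : ‖e‖ = 1) (v : E) :
    ‖v‖ ^ 2 = ⟪e, v⟫ ^ 2 + ⟪J e, v⟫ ^ 2 := by
  rw [o.inner_rightAngleRotation_left, o.inner_sq_add_areaForm_sq, he, one_pow, one_mul]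

theorem infDist_le_abs_inner_rightAngleRotation {ℓ : AffineSubspace ℝ E} {Q d : E} (hQ : Q ∈ ℓ)
    (hd : d ∈ ℓ.direction) (hd1 : ‖d‖ = 1) (X : E) :
    infDist X ℓ ≤ |⟪J d, X - Q⟫| := by
  have hY : ⟪d, X - Q⟫ • d +ᵥ Q ∈ ℓ :=
    AffineSubspace.vadd_mem_of_mem_direction (ℓ.direction.smul_mem _ hd) hQ
  refine (infDist_le_dist_of_mem hY).trans_eq ?_
  have hXY : X - (⟪d, X - Q⟫ • d +ᵥ Q) = ⟪J d, X - Q⟫ • J d := by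
    rw [vadd_eq_add, sub_add_eq_sub_sub_swap, sub_eq_iff_eq_add',
      o.inner_smul_add_inner_rightAngleRotation_smul hd1]
  rw [dist_eq_norm, hXY, norm_smul, LinearIsometryEquiv.norm_map, hd1, mul_one, norm_eq_abs]

noncomputable def hyperbolaBranch (M e : E) (a b s : ℝ) : E :=
  M + (a * cosh s) • e + (b * sinh s) • J e

theorem dist_add_smul_sq {e : E} (he : ‖e‖ = 1) (P M : E) (t : ℝ) :
    dist P (M + t • e) ^ 2 = (⟪e, P - M⟫ - t) ^ 2 + ⟪J e, P - M⟫ ^ 2 := by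
  rw [dist_eq_norm, o.norm_sq_eq_inner_sq_add_inner_rightAngleRotation_sq he, sub_add_eq_sub_sub]
  simp only [inner_sub_right, real_inner_smul_right, real_inner_self_eq_norm_sq, he,
    o.inner_rightAngleRotation_self]
  ring

theorem inner_hyperbolaBranch_sub {e : E} (he : ‖e‖ = 1) (M : E) (a b s : ℝ) :
    ⟪e, o.hyperbolaBranch M e a b s - M⟫ = a * cosh s ∧
      ⟪J e, o.hyperbolaBranch M e a b s - M⟫ = b * sinh s := by
  have hJ : ‖J e‖ = 1 := by rw [LinearIsometryEquiv.norm_map, he]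
  have heJ : ⟪e, J e⟫ = 0 := by rw [real_inner_comm, o.inner_rightAngleRotation_self]
  simp only [hyperbolaBranch, add_assoc, add_sub_cancel_left, inner_add_right,
    real_inner_smul_right, real_inner_self_eq_norm_sq, he, hJ, heJ,
    o.inner_rightAngleRotation_self]
  constructor <;> ring

theorem dist_hyperbolaBranch {e : E} (he : ‖e‖ = 1) (M : E) {a b c : ℝ} (hac : |a| ≤ c)
    (hb : b ^ 2 = c ^ 2 - a ^ 2) (s : ℝ) :
    dist (o.hyperbolaBranch M e a b s) (M - c • e) = c * cosh s + a ∧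
      dist (o.hyperbolaBranch M e a b s) (M + c • e) = c * cosh s - a := by
  obtain ⟨hx, hy⟩ := o.inner_hyperbolaBranch_sub he M a b s
  have hcosh : c ≤ c * cosh s :=
    le_mul_of_one_le_right ((abs_nonneg a).trans hac) (one_le_cosh s)
  have habs := abs_le.1 hac
  rw [sub_eq_add_neg, ← neg_smul]
  constructor
  all_goals
    refine (sq_eq_sq₀ dist_nonneg (by linarith)).1 ?_
    rw [o.dist_add_smul_sq he, hx, hy, mul_pow, hb]
    linear_combination (a ^ 2 - c ^ 2) * cosh_sq' s

theorem exists_hyperbolaBranch_eq {e : E} (he : ‖e‖ = 1) {M P : E} {a b c : ℝ} (ha : 0 < a)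
    (hc : 0 < c) (hb : b ^ 2 = c ^ 2 - a ^ 2) (hb0 : 0 < b)
    (hP : dist P (M - c • e) - dist P (M + c • e) = 2 * a) :
    ∃ s, o.hyperbolaBranch M e a b s = P := by
  have h₁ := o.dist_add_smul_sq he P M (-c)
  have h₂ := o.dist_add_smul_sq he P M c
  rw [neg_smul, ← sub_eq_add_neg, sub_neg_eq_add] at h₁
  obtain ⟨hx, hxy⟩ := hyperbola_eq_of_focal_dist_sub_eq ha hc hb hb0 h₁ h₂ dist_nonneg hP
  obtain ⟨s, hcosh, hsinh⟩ := exists_mul_cosh_eq_and_mul_sinh_eq ha hb0 hx hxy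
  refine ⟨s, ?_⟩
  rw [hyperbolaBranch, hcosh, hsinh, add_assoc,
    o.inner_smul_add_inner_rightAngleRotation_smul he, add_sub_cancel]

theorem continuous_hyperbolaBranch (M e : E) (a b : ℝ) :
    Continuous (o.hyperbolaBranch M e a b) := by
  unfold hyperbolaBranch; fun_prop

theorem exists_infDist_lt_dist_hyperbolaBranch {ℓ : AffineSubspace ℝ E} (hℓ : ℓ.direction ≠ ⊥)
    {e : E} (he : ‖e‖ = 1) (M A : E) {a b c : ℝ} (ha : 0 < a) (hac : a < c)
    (hb : b ^ 2 = c ^ 2 - a ^ 2) (hb0 : 0 ≤ b) :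
    ∃ s, infDist (o.hyperbolaBranch M e a b s) ℓ < dist (o.hyperbolaBranch M e a b s) A := by
  obtain ⟨Q, hQ, d, hd, hd1⟩ := AffineSubspace.exists_mem_and_unit_mem_direction hℓ
  have hJ : ∀ v, |⟪J d, v⟫| ≤ ‖v‖ := fun v =>
    (abs_real_inner_le_norm _ _).trans_eq (by rw [LinearIsometryEquiv.norm_map, hd1, one_mul])
  have hu : |a * ⟪J d, e⟫| < c := by
    rw [abs_mul, abs_of_pos ha]
    exact (mul_le_of_le_one_right ha.le ((hJ e).trans_eq he)).trans_lt hac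
  have hw : |b * ⟪J d, J e⟫| < c := by
    have hbc : b < c := lt_of_pow_lt_pow_left₀ 2 (by linarith) (by nlinarith)
    rw [abs_mul, abs_of_nonneg hb0]
    refine (mul_le_of_le_one_right hb0 ((hJ _).trans_eq ?_)).trans_lt hbc
    rw [LinearIsometryEquiv.norm_map, he]
  obtain ⟨s, hs⟩ := exists_abs_mul_cosh_add_mul_sinh_add_lt hu hw
    (|⟪J d, M - Q⟫| + dist (M - c • e) A - a)
  refine ⟨s, ?_⟩
  have hinner : ⟪J d, o.hyperbolaBranch M e a b s - Q⟫
      = ⟪J d, M - Q⟫ + (a * ⟪J d, e⟫ * cosh s + b * ⟪J d, J e⟫ * sinh s) := by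
    simp only [hyperbolaBranch, add_assoc, add_sub_right_comm M, inner_add_right,
      real_inner_smul_right]
    ring
  have hdist := (o.dist_hyperbolaBranch he M (abs_le.2 ⟨by linarith, hac.le⟩) hb s).1
  calc infDist (o.hyperbolaBranch M e a b s) ℓ
      ≤ |⟪J d, o.hyperbolaBranch M e a b s - Q⟫| :=
        o.infDist_le_abs_inner_rightAngleRotation hQ hd hd1 _
    _ ≤ |⟪J d, M - Q⟫| + |a * ⟪J d, e⟫ * cosh s + b * ⟪J d, J e⟫ * sinh s| := by
        rw [hinner]; exact abs_add_le _ _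
    _ < c * cosh s + a - dist (M - c • e) A := by linarith
    _ ≤ dist (o.hyperbolaBranch M e a b s) A := by
        rw [← hdist]; linarith [dist_triangle (o.hyperbolaBranch M e a b s) A (M - c • e),
          dist_comm A (M - c • e)]

theorem exists_dist_eq_infDist_hyperbolaBranch {ℓ : AffineSubspace ℝ E} (hℓ : ℓ.direction ≠ ⊥)
    {e : E} (he : ‖e‖ = 1) (M A : E) {a b c : ℝ} (ha : 0 < a) (hac : a < c)
    (hb : b ^ 2 = c ^ 2 - a ^ 2) (hb0 : 0 ≤ b) {s₀ : ℝ}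
    (hin : dist (o.hyperbolaBranch M e a b s₀) A < infDist (o.hyperbolaBranch M e a b s₀) ℓ) :
    ∃ s, dist (o.hyperbolaBranch M e a b s) A = infDist (o.hyperbolaBranch M e a b s) ℓ := by
  obtain ⟨s₁, hout⟩ := o.exists_infDist_lt_dist_hyperbolaBranch hℓ he M A ha hac hb hb0
  have hP := o.continuous_hyperbolaBranch M e a b
  have hg : Continuous fun s ↦
      dist (o.hyperbolaBranch M e a b s) A - infDist (o.hyperbolaBranch M e a b s) ℓ :=
    (hP.dist continuous_const).sub ((continuous_infDist_pt _).comp hP)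
  obtain ⟨s, -, hs⟩ := intermediate_value_uIcc (a := s₀) (b := s₁) hg.continuousOn
    (Set.mem_uIcc.2 (Or.inl ⟨(sub_neg.2 hin).le, (sub_pos.2 hout).le⟩))
  exact ⟨s, sub_eq_zero.1 hs⟩

end Orientation

theorem exists_eq_sub_smul_and_eq_add_smul {E : Type*} [NormedAddCommGroup E]
    [NormedSpace ℝ E] {F₁ F₂ : E} (h : F₁ ≠ F₂) :
    ∃ (M e : E) (c : ℝ), ‖e‖ = 1 ∧ dist F₁ F₂ = 2 * c ∧ F₁ = M - c • e ∧ F₂ = M + c • e := by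
  have hF : ‖F₂ - F₁‖ ≠ 0 := norm_ne_zero_iff.2 (sub_ne_zero.2 h.symm)
  refine ⟨midpoint ℝ F₁ F₂, ‖F₂ - F₁‖⁻¹ • (F₂ - F₁), ‖F₂ - F₁‖ / 2, norm_smul_inv_norm
    (sub_ne_zero.2 h.symm), by rw [dist_comm, dist_eq_norm]; ring, ?_, ?_⟩ <;>
  · rw [smul_smul, div_mul_eq_mul_div, mul_inv_cancel₀ hF, midpoint_eq_smul_add,
      invOf_eq_inv]
    module

section Plane

variable {E : Type*} [NormedAddCommGroup E] [InnerProductSpace ℝ E] [Fact (finrank ℝ E = 2)]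

theorem exists_dist_sub_dist_eq_and_dist_eq_infDist {ℓ : AffineSubspace ℝ E}
    (hℓ : ℓ.direction ≠ ⊥) {A F₁ F₂ P₀ : E} {a : ℝ} (ha : 0 < a) (haF : 2 * a < dist F₁ F₂)
    (hP₀ : dist P₀ F₁ - dist P₀ F₂ = 2 * a) (hin : dist P₀ A < infDist P₀ ℓ) :
    ∃ P, dist P F₁ - dist P F₂ = 2 * a ∧ dist P A = infDist P ℓ := by
  have : FiniteDimensional ℝ E := .of_fact_finrank_eq_two
  let o : Orientation ℝ E (Fin 2) := (finBasisOfFinrankEq ℝ E Fact.out).orientation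
  obtain ⟨M, e, c, he, hc, rfl, rfl⟩ := exists_eq_sub_smul_and_eq_add_smul
    (dist_pos.1 (by linarith : 0 < dist F₁ F₂))
  have hac : a < c := by linarith
  have hb : √(c ^ 2 - a ^ 2) ^ 2 = c ^ 2 - a ^ 2 := sq_sqrt (by nlinarith)
  have hb0 : 0 < √(c ^ 2 - a ^ 2) := sqrt_pos.2 (by nlinarith)
  obtain ⟨s₀, rfl⟩ := o.exists_hyperbolaBranch_eq he ha (by linarith) hb hb0 hP₀
  obtain ⟨s, hs⟩ := o.exists_dist_eq_infDist_hyperbolaBranch hℓ he M A ha hac hb hb0.le hin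
  obtain ⟨h₁, h₂⟩ := o.dist_hyperbolaBranch he M (abs_le.2 ⟨by linarith, hac.le⟩) hb s
  exact ⟨_, by rw [h₁, h₂]; ring, hs⟩

theorem exists_abs_dist_sub_dist_eq_and_dist_eq_infDist {ℓ : AffineSubspace ℝ E}
    (hℓ : ℓ.direction ≠ ⊥) {A F₁ F₂ P₀ : E} {a : ℝ} (ha : 0 < a) (haF : 2 * a < dist F₁ F₂)
    (hP₀ : |dist P₀ F₁ - dist P₀ F₂| = 2 * a) (hin : dist P₀ A < infDist P₀ ℓ) :
    ∃ P, |dist P F₁ - dist P F₂| = 2 * a ∧ dist P A = infDist P ℓ := by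
  rcases (abs_eq (by linarith)).1 hP₀ with h | h
  · obtain ⟨P, hP, hPA⟩ := exists_dist_sub_dist_eq_and_dist_eq_infDist hℓ ha haF h hin
    exact ⟨P, by rw [hP, abs_of_pos (by linarith)], hPA⟩
  · obtain ⟨P, hP, hPA⟩ := exists_dist_sub_dist_eq_and_dist_eq_infDist hℓ ha
      (by rwa [dist_comm]) (by linarith) hin
    exact ⟨P, by rw [abs_sub_comm, hP, abs_of_pos (by linarith)], hPA⟩

end Plane

theorem statement16_general (ℓ : AffineSubspace ℝ (EuclideanSpace ℝ (Fin 2)))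
    (hℓ : Module.finrank ℝ ℓ.direction = 1)
    (A : EuclideanSpace ℝ (Fin 2))
    (F₁ F₂ : EuclideanSpace ℝ (Fin 2))
    (a : ℝ) (ha : 0 < 2*a) (ha' : 2*a < dist F₁ F₂)
    (G H : Set (EuclideanSpace ℝ (Fin 2)))
    (hG : G = {P | dist P A = Metric.infDist P (ℓ : Set (EuclideanSpace ℝ (Fin 2)))})
    (hH : H = {P | |dist P F₁ - dist P F₂| = 2*a})
    (hdisj : H ∩ G = ∅) :
    ∀ P ∈ H, Metric.infDist P (ℓ : Set (EuclideanSpace ℝ (Fin 2))) ≤ dist P A := by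
  subst hG hH
  intro P₀ hP₀
  by_contra! hin
  have hℓ' : ℓ.direction ≠ ⊥ := fun h => by rw [h, finrank_bot] at hℓ; exact zero_ne_one hℓ
  obtain ⟨P, hPH, hPG⟩ :=
    exists_abs_dist_sub_dist_eq_and_dist_eq_infDist hℓ' (by linarith) ha' hP₀ hin
  exact Set.eq_empty_iff_forall_notMem.1 hdisj P ⟨hPH, hPG⟩

/-- Lemma 4.3: if a non-degenerate hyperbola `H` (foci `F₁ ≠ F₂`, parameter `a` with
`0 < 2a < dist(F₁, F₂)`) does not intersect the parabola `G` with focus `A` and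
directrix `ℓ`, then no point of `H` is strictly inside `G`: every `P ∈ H` satisfies
`dist(P, A) ≥ infDist(P, ℓ)`. -/
theorem statement16 (ℓ : AffineSubspace ℝ (EuclideanSpace ℝ (Fin 2)))
    (hℓ : Module.finrank ℝ ℓ.direction = 1)
    (A : EuclideanSpace ℝ (Fin 2)) (hA : A ∉ ℓ)
    (F₁ F₂ : EuclideanSpace ℝ (Fin 2)) (hF : F₁ ≠ F₂)
    (a : ℝ) (ha : 0 < 2*a) (ha' : 2*a < dist F₁ F₂)
    (G H : Set (EuclideanSpace ℝ (Fin 2)))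
    (hG : G = {P | dist P A = Metric.infDist P (ℓ : Set (EuclideanSpace ℝ (Fin 2)))})
    (hH : H = {P | |dist P F₁ - dist P F₂| = 2*a})
    (hdisj : H ∩ G = ∅) :
    ∀ P ∈ H, Metric.infDist P (ℓ : Set (EuclideanSpace ℝ (Fin 2))) ≤ dist P A :=
  statement16_general ℓ hℓ A F₁ F₂ a ha ha' G H hG hH hdisj
end
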